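/- Let T ≥ 1, g : ℝ^T → ℝ strictly convex and differentiable, and s : ℝ^T → ℝ^T strictly decreasing in the monotone-operator sense (⟨s(p) − s(q), p − q⟩ < 0 whenever p ≠ q). Fix p* ∈ ℝ^T and define V(p) = g(s(p)) − g(s(p*)) − ⟨∇g(s(p*)), s(p) − s(p*)⟩ − ⟨s(p) − s(p*), p − p*⟩. Then V(p*) = 0 and V(p) > 0 for every p ≠ p*. -/

import Mathlib

/-!
`V` is the Bregman divergence of `g` between `s p` and `s p*`, which is nonnegative by the
first-order characterization of convexity, minus the cross term `⟪s p - s p*, p - p*⟫`, which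
is strictly negative for `p ≠ p*` because `s` is strictly decreasing.
-/

open RealInnerProductSpace

theorem ConvexOn.add_fderiv_sub_le {E : Type*} [NormedAddCommGroup E] [NormedSpace ℝ E]
    {s : Set E} {f : E → ℝ} {f' : E →L[ℝ] ℝ} {x y : E}
    (hf : ConvexOn ℝ s f) (hx : x ∈ s) (hy : y ∈ s) (hf' : HasFDerivAt f f' x) :
    f x + f' (y - x) ≤ f y := by
  set L : ℝ →ᵃ[ℝ] E := AffineMap.lineMap x y
  have hline : ConvexOn ℝ (L ⁻¹' s) (f ∘ L) := hf.comp_affineMap L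
  have hderiv : HasDerivAt (f ∘ L) (f' (y - x)) 0 :=
    hf'.comp_hasDerivAt_of_eq 0 AffineMap.hasDerivAt_lineMap (by simp [L])
  have hslope := hline.le_slope_of_hasDerivAt (x := 0) (y := 1)
    (by simpa [L] using hx) (by simpa [L] using hy) one_pos hderiv
  simp only [slope_def_field, Function.comp_apply, AffineMap.lineMap_apply_zero,
    AffineMap.lineMap_apply_one, L, sub_zero, div_one] at hslope
  linarith

theorem ConvexOn.add_inner_gradient_sub_le {F : Type*} [NormedAddCommGroup F]
    [InnerProductSpace ℝ F] [CompleteSpace F] {s : Set F} {f : F → ℝ} {f' x y : F}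
    (hf : ConvexOn ℝ s f) (hx : x ∈ s) (hy : y ∈ s) (hf' : HasGradientAt f f' x) :
    f x + ⟪f', y - x⟫ ≤ f y := by
  simpa using hf.add_fderiv_sub_le hx hy (hasGradientAt_iff_hasFDerivAt.mp hf')

theorem bregman_lyapunov_posdef_general
    (T : ℕ)
    (g : EuclideanSpace ℝ (Fin T) → ℝ)
    (hgconv : StrictConvexOn ℝ Set.univ g) (hgdiff : Differentiable ℝ g)
    (s : EuclideanSpace ℝ (Fin T) → EuclideanSpace ℝ (Fin T))
    (hdec : ∀ p q : EuclideanSpace ℝ (Fin T), p ≠ q → ⟪s p - s q, p - q⟫ < 0)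
    (pstar : EuclideanSpace ℝ (Fin T))
    (V : EuclideanSpace ℝ (Fin T) → ℝ)
    (hV : ∀ p, V p = g (s p) - g (s pstar)
      - ⟪gradient g (s pstar), s p - s pstar⟫ - ⟪s p - s pstar, p - pstar⟫) :
    V pstar = 0 ∧ ∀ p, p ≠ pstar → 0 < V p := by
  refine ⟨by simp [hV], fun p hp => ?_⟩
  have hbregman : g (s pstar) + ⟪gradient g (s pstar), s p - s pstar⟫ ≤ g (s p) :=
    hgconv.convexOn.add_inner_gradient_sub_le trivial trivial (hgdiff _).hasGradientAt
  have hcross : ⟪s p - s pstar, p - pstar⟫ < 0 := hdec p pstar hp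
  rw [hV]
  linarith

/-- Positive definiteness of the Bregman-divergence-based Lyapunov function of Theorem 2,
case 2: with `g` strictly convex and differentiable and `s` strictly decreasing in the
monotone-operator sense, the function
`V(p) = g(s(p)) - g(s(p*)) - ⟨∇g(s(p*)), s(p) - s(p*)⟩ - ⟨s(p) - s(p*), p - p*⟩`
satisfies `V(p*) = 0` and `V(p) > 0` for every `p ≠ p*`. -/
theorem bregman_lyapunov_posdef
    (T : ℕ) (hT : 1 ≤ T)
    (g : EuclideanSpace ℝ (Fin T) → ℝ)
    (hgconv : StrictConvexOn ℝ Set.univ g) (hgdiff : Differentiable ℝ g)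
    (s : EuclideanSpace ℝ (Fin T) → EuclideanSpace ℝ (Fin T))
    (hdec : ∀ p q : EuclideanSpace ℝ (Fin T), p ≠ q → ⟪s p - s q, p - q⟫ < 0)
    (pstar : EuclideanSpace ℝ (Fin T))
    (V : EuclideanSpace ℝ (Fin T) → ℝ)
    (hV : ∀ p, V p = g (s p) - g (s pstar)
      - ⟪gradient g (s pstar), s p - s pstar⟫ - ⟪s p - s pstar, p - pstar⟫) :
    V pstar = 0 ∧ ∀ p, p ≠ pstar → 0 < V p :=
  bregman_lyapunov_posdef_general T g hgconv hgdiff s hdec pstar V hV
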